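/- arXiv:2412.18432 — 9 statements merged into one kernel-verified Lean document; each statement's English description precedes it below -/
import Mathlib

section
/- For positive definite matrices u and v of the same size, the geometric mean is symmetric: v^{1/2}(v^{-1/2} u v^{-1/2})^{1/2} v^{1/2} = u^{1/2}(u^{-1/2} v u^{-1/2})^{1/2} u^{1/2}. -/
open Matrix
open scoped Classical

/-- The principal symmetric positive semidefinite square root of a matrix
(junk value `0` if the matrix is not positive semidefinite). -/
noncomputable def psqrt {d : ℕ} (A : Matrix (Fin d) (Fin d) ℝ) : Matrix (Fin d) (Fin d) ℝ :=
  if h : A.PosSemidef then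
    (h.1.eigenvectorUnitary : Matrix (Fin d) (Fin d) ℝ) *
      diagonal (fun i => Real.sqrt (h.1.eigenvalues i)) *
      (star h.1.eigenvectorUnitary : Matrix (Fin d) (Fin d) ℝ)
  else 0

/-!
The geometric mean `u ♯ v` is the unique positive semidefinite solution `X` of the Riccati
equation `X u⁻¹ X = v`: conjugating by `u^{-1/2}` turns the equation into
`Y² = u^{-1/2} v u^{-1/2}` for `Y = u^{-1/2} X u^{-1/2}`, and positive semidefinite square roots
are unique. For invertible matrices `X v⁻¹ X = u` is equivalent to `X u⁻¹ X = v` (invert both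
sides), so `v ♯ u` solves the equation that characterizes `u ♯ v`.
-/

open scoped MatrixOrder

theorem Matrix.mul_inv_mul_eq_of_mul_inv_mul_eq {n K : Type*} [Fintype n] [DecidableEq n]
    [CommRing K] {u v X : Matrix n n K} (hu : IsUnit u.det) (hv : IsUnit v.det)
    (h : X * v⁻¹ * X = u) : X * u⁻¹ * X = v := by
  have hX : IsUnit X.det := by
    rw [← h, det_mul, det_mul] at hu
    exact isUnit_of_mul_isUnit_left (isUnit_of_mul_isUnit_left hu)
  rw [← h, mul_inv_rev, mul_inv_rev, nonsing_inv_nonsing_inv _ hv]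
  simp only [← mul_assoc, nonsing_inv_mul_cancel_right _ _ hX, mul_nonsing_inv _ hX, one_mul]

theorem Matrix.PosSemidef.mul_mul_of_isHermitian {n R : Type*} [Fintype n] [CommRing R]
    [PartialOrder R] [StarRing R] {A H : Matrix n n R} (hA : A.PosSemidef) (hH : H.IsHermitian) :
    (H * A * H).PosSemidef := by
  simpa only [hH.eq] using hA.mul_mul_conjTranspose_same H

section GeometricMean

variable {d : ℕ}

theorem psqrt_eq_cfcSqrt {A : Matrix (Fin d) (Fin d) ℝ} (hA : A.PosSemidef) :
    psqrt A = CFC.sqrt A := by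
  rw [CFC.sqrt_eq_real_sqrt A hA.nonneg, cfcₙ_eq_cfc, hA.1.cfc_eq, psqrt, dif_pos hA]
  simp [IsHermitian.cfc, Unitary.conjStarAlgAut_apply, Function.comp_def]

theorem posSemidef_psqrt (A : Matrix (Fin d) (Fin d) ℝ) : (psqrt A).PosSemidef := by
  by_cases hA : A.PosSemidef
  · rw [psqrt_eq_cfcSqrt hA]
    exact (CFC.sqrt_nonneg A).posSemidef
  · simp only [psqrt, dif_neg hA, PosSemidef.zero]

theorem psqrt_mul_self {A : Matrix (Fin d) (Fin d) ℝ} (hA : A.PosSemidef) :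
    psqrt A * psqrt A = A := by
  rw [psqrt_eq_cfcSqrt hA]
  exact CFC.sqrt_mul_sqrt_self A

theorem psqrt_eq_of_mul_self_eq {A B : Matrix (Fin d) (Fin d) ℝ} (hB : B.PosSemidef)
    (h : B * B = A) : psqrt A = B := by
  have hA := posSemidef_conjTranspose_mul_self B
  rw [hB.1.eq, h] at hA
  rw [psqrt_eq_cfcSqrt hA]
  exact CFC.sqrt_unique h hB.nonneg

theorem isUnit_det_psqrt {A : Matrix (Fin d) (Fin d) ℝ} (hA : A.PosDef) :
    IsUnit (psqrt A).det := by
  have h := hA.det_pos.ne'.isUnit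
  rw [← psqrt_mul_self hA.posSemidef, det_mul] at h
  exact isUnit_of_mul_isUnit_left h

noncomputable def geomMean (u v : Matrix (Fin d) (Fin d) ℝ) : Matrix (Fin d) (Fin d) ℝ :=
  psqrt u * psqrt ((psqrt u)⁻¹ * v * (psqrt u)⁻¹) * psqrt u

theorem posSemidef_geomMean (u v : Matrix (Fin d) (Fin d) ℝ) : (geomMean u v).PosSemidef :=
  (posSemidef_psqrt _).mul_mul_of_isHermitian (posSemidef_psqrt u).1

theorem psqrt_inv_mul_psqrt_inv {u : Matrix (Fin d) (Fin d) ℝ} (hu : u.PosDef) :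
    (psqrt u)⁻¹ * (psqrt u)⁻¹ = u⁻¹ := by
  rw [← Matrix.mul_inv_rev, psqrt_mul_self hu.posSemidef]

theorem geomMean_mul_inv_mul_geomMean {u v : Matrix (Fin d) (Fin d) ℝ} (hu : u.PosDef)
    (hv : v.PosSemidef) : geomMean u v * u⁻¹ * geomMean u v = v := by
  have ha := isUnit_det_psqrt hu
  have hs := psqrt_mul_self (hv.mul_mul_of_isHermitian (posSemidef_psqrt u).1.inv)
  rw [geomMean, ← psqrt_inv_mul_psqrt_inv hu]
  generalize psqrt ((psqrt u)⁻¹ * v * (psqrt u)⁻¹) = s at *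
  generalize psqrt u = a at *
  calc a * s * a * (a⁻¹ * a⁻¹) * (a * s * a) = a * (s * s) * a := by
        simp only [mul_assoc, mul_nonsing_inv_cancel_left _ _ ha,
          nonsing_inv_mul_cancel_left _ _ ha]
    _ = v := by
        simp only [hs, mul_assoc, nonsing_inv_mul _ ha, mul_one,
          mul_nonsing_inv_cancel_left _ _ ha]

theorem geomMean_eq_of_mul_inv_mul_eq {u v X : Matrix (Fin d) (Fin d) ℝ} (hu : u.PosDef)
    (hX : X.PosSemidef) (h : X * u⁻¹ * X = v) : geomMean u v = X := by
  have ha := isUnit_det_psqrt hu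
  have hsqrt : psqrt ((psqrt u)⁻¹ * v * (psqrt u)⁻¹) = (psqrt u)⁻¹ * X * (psqrt u)⁻¹ := by
    refine psqrt_eq_of_mul_self_eq (hX.mul_mul_of_isHermitian (posSemidef_psqrt u).1.inv) ?_
    simp only [← h, ← psqrt_inv_mul_psqrt_inv hu, mul_assoc]
  rw [geomMean, hsqrt]
  simp only [mul_assoc, nonsing_inv_mul _ ha, mul_one, mul_nonsing_inv_cancel_left _ _ ha]

end GeometricMean

/-- For positive definite matrices `u` and `v`, the geometric mean is symmetric:
`v^{1/2} (v^{-1/2} u v^{-1/2})^{1/2} v^{1/2} = u^{1/2} (u^{-1/2} v u^{-1/2})^{1/2} u^{1/2}`. -/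
theorem geometric_mean_symm {d : ℕ} (u v : Matrix (Fin d) (Fin d) ℝ)
    (hu : u.PosDef) (hv : v.PosDef) :
    psqrt v * psqrt ((psqrt v)⁻¹ * u * (psqrt v)⁻¹) * psqrt v =
      psqrt u * psqrt ((psqrt u)⁻¹ * v * (psqrt u)⁻¹) * psqrt u := by
  have hric : geomMean v u * u⁻¹ * geomMean v u = v :=
    mul_inv_mul_eq_of_mul_inv_mul_eq hu.det_pos.ne'.isUnit hv.det_pos.ne'.isUnit
      (geomMean_mul_inv_mul_geomMean hv hu.posSemidef)
  exact (geomMean_eq_of_mul_inv_mul_eq hu (posSemidef_geomMean v u) hric).symm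
end

section
/- For a positive definite matrix ϖ, the matrix r := -ϖ/2 + (ϖ + (ϖ/2)^2)^{1/2} is positive definite, satisfies r ≤ I, satisfies (I + ϖ^{-1})^{-1} ≤ r, and is a fixed point of the Riccati map: r = (I + (ϖ + r)^{-1})^{-1}. -/
/-!
Write `ρ x = √(x + (x/2)²) - x/2`, the positive root of `ρ² + x ρ = x`. Since the principal
square root is `cfc √`, the matrix `r` is `ρ(ϖ)` in the continuous functional calculus, and all
four claims become statements about real functions of `ϖ`, to be checked pointwise on the
spectrum of `ϖ`, which lies in `(0, ∞)`. There `0 < ρ x ≤ 1`, and `ρ x (x + ρ x) = x` is exactly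
the scalar fixed-point equation `ρ = (1 + (x + ρ)⁻¹)⁻¹`; with `ρ ≤ 1` it also gives
`ρ = x / (x + ρ) ≥ x / (x + 1) = (1 + x⁻¹)⁻¹`.
-/

open Matrix
open scoped Classical

open scoped MatrixOrder ComplexOrder

noncomputable def riccatiFixedPoint (x : ℝ) : ℝ := √(x + (x / 2) ^ 2) - x / 2

section Scalar

variable {x : ℝ}

lemma riccatiFixedPoint_pos (hx : 0 < x) : 0 < riccatiFixedPoint x :=
  sub_pos.2 (Real.lt_sqrt_of_sq_lt (by linarith))

lemma riccatiFixedPoint_le_one (hx : 0 ≤ x) : riccatiFixedPoint x ≤ 1 := by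
  rw [riccatiFixedPoint, sub_le_iff_le_add, Real.sqrt_le_left (by positivity)]
  nlinarith

lemma riccatiFixedPoint_mul_add_self (hx : 0 ≤ x) :
    riccatiFixedPoint x * (x + riccatiFixedPoint x) = x := by
  have hsq := Real.sq_sqrt (show 0 ≤ x + (x / 2) ^ 2 by positivity)
  rw [riccatiFixedPoint]
  linear_combination hsq

lemma inv_one_add_inv_add_riccatiFixedPoint (hx : 0 < x) :
    (1 + (x + riccatiFixedPoint x)⁻¹)⁻¹ = riccatiFixedPoint x := by
  have h := riccatiFixedPoint_mul_add_self hx.le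
  have hsum : 0 < x + riccatiFixedPoint x := add_pos hx (riccatiFixedPoint_pos hx)
  field_simp
  linear_combination -h

lemma inv_one_add_inv_le_riccatiFixedPoint (hx : 0 < x) :
    (1 + x⁻¹)⁻¹ ≤ riccatiFixedPoint x := by
  have h := riccatiFixedPoint_mul_add_self hx.le
  have hpos := riccatiFixedPoint_pos hx
  have hle := riccatiFixedPoint_le_one hx.le
  rw [inv_le_comm₀ (by positivity) hpos]
  calc (riccatiFixedPoint x)⁻¹ = 1 + riccatiFixedPoint x / x := by
        field_simp
        linear_combination -h
    _ ≤ 1 + x⁻¹ := by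
        rw [← one_div]
        gcongr

end Scalar

namespace Matrix

variable {n 𝕜 : Type*} [Fintype n] [DecidableEq n] [RCLike 𝕜]

lemma continuousOn_real_spectrum (f : ℝ → ℝ) (A : Matrix n n 𝕜) :
    ContinuousOn f (spectrum ℝ A) :=
  A.finite_real_spectrum.continuousOn f

lemma IsHermitian.cfc_inv {A : Matrix n n 𝕜} (hA : A.IsHermitian) {f : ℝ → ℝ}
    (hf : ∀ x ∈ spectrum ℝ A, f x ≠ 0) : cfc (fun x ↦ (f x)⁻¹) A = (cfc f A)⁻¹ := by
  rw [nonsing_inv_eq_ringInverse]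
  exact _root_.cfc_inv f A hf (continuousOn_real_spectrum f A) hA

lemma IsHermitian.inv_one_add_inv_cfc {A : Matrix n n 𝕜} (hA : A.IsHermitian) {f : ℝ → ℝ}
    (hf : ∀ x ∈ spectrum ℝ A, 0 < f x) :
    (1 + (cfc f A)⁻¹)⁻¹ = cfc (fun x ↦ (1 + (f x)⁻¹)⁻¹) A := by
  have hf' : ∀ x ∈ spectrum ℝ A, 0 < 1 + (f x)⁻¹ := fun x hx ↦ by
    have := hf x hx
    positivity
  rw [hA.cfc_inv fun x hx ↦ (hf' x hx).ne',
    cfc_const_add (1 : ℝ) (fun x ↦ (f x)⁻¹) A (continuousOn_real_spectrum _ A), map_one,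
    hA.cfc_inv fun x hx ↦ (hf x hx).ne']

namespace PosDef

variable {A : Matrix n n 𝕜}

lemma spectrum_pos (hA : A.PosDef) : ∀ x ∈ spectrum ℝ A, 0 < x :=
  (StarOrderedRing.isStrictlyPositive_iff_spectrum_pos A).1 hA.isStrictlyPositive

lemma posDef_cfc_riccatiFixedPoint (hA : A.PosDef) : (cfc riccatiFixedPoint A).PosDef := by
  rw [← isStrictlyPositive_iff_posDef,
    cfc_isStrictlyPositive_iff _ A (continuousOn_real_spectrum _ A)]
  exact fun x hx ↦ riccatiFixedPoint_pos (hA.spectrum_pos x hx)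

lemma cfc_riccatiFixedPoint_le_one (hA : A.PosDef) : cfc riccatiFixedPoint A ≤ 1 :=
  cfc_le_one _ A fun x hx ↦ riccatiFixedPoint_le_one (hA.spectrum_pos x hx).le

lemma inv_one_add_inv_le_cfc_riccatiFixedPoint (hA : A.PosDef) :
    (1 + A⁻¹)⁻¹ ≤ cfc riccatiFixedPoint A := by
  conv_lhs => rw [← cfc_id' ℝ A]
  rw [hA.1.inv_one_add_inv_cfc hA.spectrum_pos]
  exact cfc_mono (fun x hx ↦ inv_one_add_inv_le_riccatiFixedPoint (hA.spectrum_pos x hx))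
    (continuousOn_real_spectrum _ A) (continuousOn_real_spectrum _ A)

lemma inv_one_add_inv_add_cfc_riccatiFixedPoint (hA : A.PosDef) :
    (1 + (A + cfc riccatiFixedPoint A)⁻¹)⁻¹ = cfc riccatiFixedPoint A := by
  have hsum : A + cfc riccatiFixedPoint A = cfc (fun x ↦ x + riccatiFixedPoint x) A := by
    rw [cfc_add A (fun x ↦ x) _ (continuousOn_real_spectrum _ A) (continuousOn_real_spectrum _ A),
      cfc_id' ℝ A]
  have hpos := hA.spectrum_pos
  rw [hsum, hA.1.inv_one_add_inv_cfc fun x hx ↦ ?_]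
  · exact cfc_congr fun x hx ↦ inv_one_add_inv_add_riccatiFixedPoint (hpos x hx)
  · exact add_pos (hpos x hx) (riccatiFixedPoint_pos (hpos x hx))

end PosDef

end Matrix

lemma psqrt_eq_cfc_sqrt {d : ℕ} {A : Matrix (Fin d) (Fin d) ℝ} (hA : A.PosSemidef) :
    psqrt A = cfc Real.sqrt A := by
  rw [psqrt, dif_pos hA, hA.1.cfc_eq, IsHermitian.cfc, Unitary.conjStarAlgAut_apply]
  rfl

lemma neg_half_smul_add_psqrt_eq_cfc_riccatiFixedPoint {d : ℕ} {ϖ : Matrix (Fin d) (Fin d) ℝ}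
    (hϖ : ϖ.PosSemidef) :
    (-(1/2 : ℝ)) • ϖ + psqrt (ϖ + ((1/2 : ℝ) • ϖ) * ((1/2 : ℝ) • ϖ)) =
      cfc riccatiFixedPoint ϖ := by
  have hquad : ϖ + ((1/2 : ℝ) • ϖ) * ((1/2 : ℝ) • ϖ) =
      cfc (fun x : ℝ ↦ x + (1/2 * x) * (1/2 * x)) ϖ := by
    rw [cfc_add ϖ (fun x : ℝ ↦ x) (fun x ↦ (1/2 * x) * (1/2 * x)),
      cfc_mul (fun x : ℝ ↦ 1/2 * x) (fun x ↦ 1/2 * x) ϖ, cfc_const_mul_id (1/2 : ℝ) ϖ,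
      cfc_id' ℝ ϖ]
  have hspec := (StarOrderedRing.nonneg_iff_spectrum_nonneg (R := ℝ) ϖ).1 hϖ.nonneg
  have hquad_nonneg : 0 ≤ cfc (fun x : ℝ ↦ x + (1/2 * x) * (1/2 * x)) ϖ :=
    cfc_nonneg fun x hx ↦ by
      have := hspec x hx
      positivity
  calc _ = cfc (fun x : ℝ ↦ -(1/2) * x) ϖ + cfc (fun x ↦ √(x + (1/2 * x) * (1/2 * x))) ϖ := by
        rw [cfc_const_mul_id (-(1/2) : ℝ) ϖ, hquad,
          psqrt_eq_cfc_sqrt (nonneg_iff_posSemidef.1 hquad_nonneg), cfc_comp' Real.sqrt _ ϖ]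
    _ = cfc riccatiFixedPoint ϖ := by
        rw [← cfc_add ϖ (fun x : ℝ ↦ -(1/2) * x) (fun x ↦ √(x + (1/2 * x) * (1/2 * x)))]
        exact cfc_congr fun x _ ↦ by simp only [riccatiFixedPoint]; ring_nf

/-- For a positive definite matrix `ϖ`, the matrix `r := -ϖ/2 + (ϖ + (ϖ/2)²)^{1/2}` is positive
definite, satisfies `r ≤ I` and `(I + ϖ⁻¹)⁻¹ ≤ r` (in the Loewner order), and is a fixed point
of the Riccati map: `r = (I + (ϖ + r)⁻¹)⁻¹`. -/
theorem riccati_closed_form_fixed_point {d : ℕ} (ϖ r : Matrix (Fin d) (Fin d) ℝ)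
    (hϖ : ϖ.PosDef)
    (hr : r = (-(1/2 : ℝ)) • ϖ + psqrt (ϖ + ((1/2 : ℝ) • ϖ) * ((1/2 : ℝ) • ϖ))) :
    r.PosDef ∧
    ((1 : Matrix (Fin d) (Fin d) ℝ) - r).PosSemidef ∧
    (r - (1 + ϖ⁻¹)⁻¹).PosSemidef ∧
    r = (1 + (ϖ + r)⁻¹)⁻¹ := by
  rw [neg_half_smul_add_psqrt_eq_cfc_riccatiFixedPoint hϖ.posSemidef] at hr
  subst hr
  exact ⟨hϖ.posDef_cfc_riccatiFixedPoint, le_iff.1 hϖ.cfc_riccatiFixedPoint_le_one,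
    le_iff.1 hϖ.inv_one_add_inv_le_cfc_riccatiFixedPoint,
    hϖ.inv_one_add_inv_add_cfc_riccatiFixedPoint.symm⟩
end

section
/- For the Riccati map Ricc_ϖ(v) = (I + (ϖ+v)^{-1})^{-1} with ϖ positive definite, for any positive semi-definite starting matrices, after one iteration all iterates v_n satisfy (I + ϖ^{-1})^{-1} ≤ v_n ≤ I, and after two iterations v_n ≤ (I + (ϖ+I)^{-1})^{-1}, equivalently (I + (ϖ+I))^{-1} ≤ I - v_n ≤ (I + ϖ)^{-1}. -/
/-!
The Riccati map `v ↦ (1 + (ϖ + v)⁻¹)⁻¹` is monotone on positive semidefinite matrices, being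
a composition of two order-reversing inversions of positive definite matrices, and it maps them
below `1`, since `1 ≤ 1 + (ϖ + v)⁻¹`. Hence from the first iterate on, `0 ≤ v` gives the lower
bound `Ricc_ϖ 0 = (1 + ϖ⁻¹)⁻¹` and `v ≤ 1` the upper bound `1`; from the second iterate on,
`v ≤ 1` improves the latter to `Ricc_ϖ 1`. The bounds on `1 - v` follow from
`1 - (1 + A⁻¹)⁻¹ = (1 + A)⁻¹`.
-/

open Matrix

open scoped ComplexOrder MatrixOrder

namespace Matrix

variable {n : Type*} [DecidableEq n]

theorem PosDef.one_add {𝕜 : Type*} [RCLike 𝕜] {A : Matrix n n 𝕜} (hA : A.PosDef) :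
    (1 + A).PosDef :=
  PosDef.one.add_posSemidef hA.posSemidef

variable [Fintype n]

theorem one_sub_inv_one_add_inv {R : Type*} [CommRing R] {A : Matrix n n R} (hA : IsUnit A)
    (hA1 : IsUnit (1 + A)) : 1 - (1 + A⁻¹)⁻¹ = (1 + A)⁻¹ := by
  have h : 1 + A⁻¹ = (1 + A) * A⁻¹ := by
    rw [add_mul, one_mul, mul_nonsing_inv _ ((isUnit_iff_isUnit_det A).1 hA), add_comm]
  rw [h, mul_inv_rev, nonsing_inv_nonsing_inv _ ((isUnit_iff_isUnit_det A).1 hA)]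
  nth_rewrite 1 [← mul_nonsing_inv _ ((isUnit_iff_isUnit_det _).1 hA1)]
  rw [← sub_mul, add_sub_cancel_right, one_mul]

variable {𝕜 : Type*} [RCLike 𝕜]

/-- Both Schur complements of the block matrix `[B 1; 1 A⁻¹]` are positive semidefinite
together with it: they are `B - A` and `A⁻¹ - B⁻¹`. -/
theorem inv_le_inv_of_le {A B : Matrix n n 𝕜} (hA : A.PosDef) (hAB : A ≤ B) : B⁻¹ ≤ A⁻¹ := by
  have hB : B.PosDef := by simpa using hA.add_posSemidef hAB
  have := hA.isUnit.invertible
  have := hA.inv.isUnit.invertible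
  have := hB.isUnit.invertible
  have hblock : (fromBlocks B 1 (1 : Matrix n n 𝕜)ᴴ A⁻¹).PosSemidef := by
    rw [PosDef.fromBlocks₂₂ _ _ hA.inv, inv_inv_of_invertible]
    simpa using le_iff.mp hAB
  rw [PosDef.fromBlocks₁₁ _ _ hB] at hblock
  exact le_iff.mpr (by simpa using hblock)

end Matrix

section Riccati

variable {n 𝕜 : Type*} [Fintype n] [DecidableEq n] [RCLike 𝕜] {ϖ v w : Matrix n n 𝕜}

noncomputable def riccati (ϖ v : Matrix n n 𝕜) : Matrix n n 𝕜 := (1 + (ϖ + v)⁻¹)⁻¹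

theorem riccati_zero : riccati ϖ 0 = (1 + ϖ⁻¹)⁻¹ := by
  rw [riccati, add_zero]

theorem riccati_posDef (hϖ : ϖ.PosDef) (hv : 0 ≤ v) : (riccati ϖ v).PosDef :=
  (hϖ.add_posSemidef hv.posSemidef).inv.one_add.inv

theorem riccati_le_riccati (hϖ : ϖ.PosDef) (hv : 0 ≤ v) (hvw : v ≤ w) :
    riccati ϖ v ≤ riccati ϖ w := by
  have hϖv : (ϖ + v).PosDef := hϖ.add_posSemidef hv.posSemidef
  have hϖw : (ϖ + w).PosDef := hϖ.add_posSemidef (hv.trans hvw).posSemidef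
  have hinv : (ϖ + w)⁻¹ ≤ (ϖ + v)⁻¹ := inv_le_inv_of_le hϖv (by gcongr)
  exact inv_le_inv_of_le hϖw.inv.one_add (by gcongr)

theorem riccati_le_one (hϖ : ϖ.PosDef) (hv : 0 ≤ v) : riccati ϖ v ≤ 1 := by
  have h : (1 : Matrix n n 𝕜) ≤ 1 + (ϖ + v)⁻¹ :=
    le_add_of_nonneg_right (hϖ.add_posSemidef hv.posSemidef).inv.posSemidef.nonneg
  rw [riccati]
  simpa using inv_le_inv_of_le PosDef.one h

end Riccati

/-- For the Riccati map `Ricc_ϖ(v) = (I + (ϖ+v)⁻¹)⁻¹` with `ϖ` positive definite and any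
positive semi-definite starting matrix, after one iteration all iterates satisfy
`(I + ϖ⁻¹)⁻¹ ≤ v_n ≤ I`, and after two iterations `v_n ≤ (I + (ϖ+I)⁻¹)⁻¹`, equivalently
`(I + (ϖ+I))⁻¹ ≤ I - v_n ≤ (I + ϖ)⁻¹` (Loewner order). -/
theorem riccati_iterates_bounds {d : ℕ} (ϖ : Matrix (Fin d) (Fin d) ℝ) (hϖ : ϖ.PosDef)
    (v : ℕ → Matrix (Fin d) (Fin d) ℝ) (hv0 : (v 0).PosSemidef)
    (hrec : ∀ n : ℕ, v (n + 1) = (1 + (ϖ + v n)⁻¹)⁻¹) :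
    (∀ n : ℕ, 1 ≤ n →
      (v n - (1 + ϖ⁻¹)⁻¹).PosSemidef ∧ ((1 : Matrix (Fin d) (Fin d) ℝ) - v n).PosSemidef) ∧
    (∀ n : ℕ, 2 ≤ n →
      ((1 + (ϖ + 1)⁻¹)⁻¹ - v n).PosSemidef ∧
      (((1 : Matrix (Fin d) (Fin d) ℝ) - v n) - (1 + (ϖ + 1))⁻¹).PosSemidef ∧
      ((1 + ϖ)⁻¹ - ((1 : Matrix (Fin d) (Fin d) ℝ) - v n)).PosSemidef) := by
  have hricc : ∀ n, v (n + 1) = riccati ϖ (v n) := hrec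
  have hnonneg : ∀ n, 0 ≤ v n := by
    intro n
    induction n with
    | zero => exact hv0.nonneg
    | succ n ih => exact hricc n ▸ (riccati_posDef hϖ ih).posSemidef.nonneg
  have hfirst : ∀ n, 1 ≤ n → (1 + ϖ⁻¹)⁻¹ ≤ v n ∧ v n ≤ 1 := by
    intro n hn
    obtain ⟨k, rfl⟩ := Nat.exists_eq_add_of_le' hn
    rw [hricc, ← riccati_zero]
    exact ⟨riccati_le_riccati hϖ le_rfl (hnonneg k), riccati_le_one hϖ (hnonneg k)⟩
  have hsecond : ∀ n, 2 ≤ n → v n ≤ riccati ϖ 1 := by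
    intro n hn
    obtain ⟨k, rfl⟩ := Nat.exists_eq_add_of_le' hn
    rw [hricc]
    exact riccati_le_riccati hϖ (hnonneg _) (hfirst (k + 1) le_add_self).2
  refine ⟨hfirst, fun n hn => ⟨hsecond n hn, ?_, ?_⟩⟩
  · have hϖ1 : (ϖ + 1).PosDef := hϖ.add_posSemidef PosSemidef.one
    rw [← one_sub_inv_one_add_inv hϖ1.isUnit hϖ1.one_add.isUnit]
    exact le_iff.mp (sub_le_sub_left (hsecond n hn) 1)
  · rw [← one_sub_inv_one_add_inv hϖ.isUnit hϖ.one_add.isUnit]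
    exact le_iff.mp (sub_le_sub_left (hfirst n (by omega)).1 1)
end

section
/- If u = (I + γ' v γ)^{-1} for an invertible matrix γ and a positive definite matrix v, then (I + γ u γ')^{-1} = (I + (ϖ + v)^{-1})^{-1}, where ϖ := (γ γ')^{-1}. In particular, composing the two update maps v ↦ (I + γ' v γ)^{-1} ↦ (I + γ (·) γ')^{-1} yields the Riccati map v ↦ Ricc_ϖ(v). -/
open Matrix

/-- If `u = (I + γᵀ v γ)⁻¹` for an invertible matrix `γ` and a positive definite matrix `v`,
then `(I + γ u γᵀ)⁻¹ = (I + (ϖ + v)⁻¹)⁻¹` where `ϖ := (γ γᵀ)⁻¹`; in particular the composition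
of the two update maps is the Riccati map `v ↦ Ricc_ϖ(v)`. -/
theorem riccati_composition {d : ℕ} (γ v : Matrix (Fin d) (Fin d) ℝ)
    (hγ : IsUnit γ) (hv : v.PosDef) :
    (1 + γ * (1 + γᵀ * v * γ)⁻¹ * γᵀ)⁻¹ = (1 + ((γ * γᵀ)⁻¹ + v)⁻¹)⁻¹ := by
  have hγd : IsUnit γ.det := (Matrix.isUnit_iff_isUnit_det γ).mp hγ
  have hγtd : IsUnit γᵀ.det := by simpa [Matrix.det_transpose] using hγd
  have hps : (γᵀ * v * γ).PosSemidef := by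
    have := hv.posSemidef.conjTranspose_mul_mul_same γ
    simpa using this
  have hpd : (1 + γᵀ * v * γ).PosDef := Matrix.PosDef.add_posSemidef Matrix.PosDef.one hps
  have hAd : IsUnit (1 + γᵀ * v * γ).det := isUnit_iff_ne_zero.mpr hpd.det_pos.ne'
  have key : (γ * γᵀ)⁻¹ + v = γᵀ⁻¹ * (1 + γᵀ * v * γ) * γ⁻¹ := by
    rw [Matrix.mul_inv_rev]
    rw [mul_add, add_mul]
    congr 1
    · simp
    · symm
      calc γᵀ⁻¹ * (γᵀ * v * γ) * γ⁻¹
            = γᵀ⁻¹ * γᵀ * v * (γ * γ⁻¹) := by noncomm_ring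
          _ = v := by rw [Matrix.nonsing_inv_mul _ hγtd, Matrix.mul_nonsing_inv _ hγd]; simp
  have key2 : ((γ * γᵀ)⁻¹ + v)⁻¹ = γ * (1 + γᵀ * v * γ)⁻¹ * γᵀ := by
    rw [key, Matrix.mul_inv_rev, Matrix.mul_inv_rev, Matrix.nonsing_inv_nonsing_inv _ hγd,
      Matrix.nonsing_inv_nonsing_inv _ hγtd, ← mul_assoc]
  rw [key2]
end

section
/- For positive definite fixed points r_θ and r̄_{θ1} satisfying the dual relations r_θ^{-1} = I + γ r̄_{θ1} γ' and r̄_{θ1}^{-1} = I + γ' r_θ γ for an invertible matrix γ, the commutation property γ' r_θ = r̄_{θ1} γ' holds. -/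
open Matrix

/-- For positive definite fixed points `r_θ` and `r̄_{θ₁}` satisfying the dual relations
`r_θ⁻¹ = I + γ r̄_{θ₁} γᵀ` and `r̄_{θ₁}⁻¹ = I + γᵀ r_θ γ` for an invertible matrix `γ`,
the commutation property `γᵀ r_θ = r̄_{θ₁} γᵀ` holds. -/
theorem dual_fixed_point_commutation {d : ℕ} (γ r rbar : Matrix (Fin d) (Fin d) ℝ)
    (hγ : IsUnit γ) (hr : r.PosDef) (hrbar : rbar.PosDef)
    (h₁ : r⁻¹ = 1 + γ * rbar * γᵀ)
    (h₂ : rbar⁻¹ = 1 + γᵀ * r * γ) :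
    γᵀ * r = rbar * γᵀ := by
  have hrdet : IsUnit r.det := hr.det_pos.ne'.isUnit
  have hrbardet : IsUnit rbar.det := hrbar.det_pos.ne'.isUnit
  have e1 : γ * rbar * γᵀ * r = 1 - r := by
    have h := Matrix.nonsing_inv_mul r hrdet
    rw [h₁, add_mul, one_mul] at h
    exact eq_sub_of_add_eq' h
  have e2 : rbar * (1 + γᵀ * r * γ) = 1 := by
    rw [← h₂]; exact Matrix.mul_nonsing_inv rbar hrbardet
  have e2' : rbar * (γᵀ * r * γ) = 1 - rbar := by
    have h := e2
    rw [mul_add, mul_one] at h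
    exact eq_sub_of_add_eq' h
  have key : r * (γ * γᵀ) * r = 1 - r := by
    calc r * (γ * γᵀ) * r
        = (1 - (1 - r)) * (γ * γᵀ * r) := by noncomm_ring
      _ = (1 - γ * rbar * γᵀ * r) * (γ * γᵀ * r) := by rw [e1]
      _ = γ * γᵀ * r - γ * (rbar * (γᵀ * r * γ)) * γᵀ * r := by noncomm_ring
      _ = γ * γᵀ * r - γ * (1 - rbar) * γᵀ * r := by rw [e2']
      _ = γ * rbar * γᵀ * r := by noncomm_ring
      _ = 1 - r := e1
  calc γᵀ * r
      = rbar * (1 + γᵀ * r * γ) * (γᵀ * r) := by rw [e2, one_mul]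
    _ = rbar * γᵀ * (r + r * (γ * γᵀ) * r) := by noncomm_ring
    _ = rbar * γᵀ * (r + (1 - r)) := by rw [key]
    _ = rbar * γᵀ := by noncomm_ring
end

section
/- If r is the unique positive definite fixed point of Ricc_ϖ with ϖ = (γγ')^{-1} for invertible γ, then r̂ defined by r̂^{-1} = I + γ' r γ is the unique positive definite fixed point of Ricc_{ϖ̄} with ϖ̄ = (γ'γ)^{-1}. -/
open Matrix

/-!
For positive definite `W` and `s`, the fixed-point equation `s = Ricc_W(s)` is equivalent to the
quadratic equation `s² + sW = W`. Its positive definite solution is unique: the difference `D`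
of two solutions solves the Sylvester equation `s₁D + D(s₂ + W) = 0`, and pairing it with `D`
writes `0` as a sum of two nonnegative traces, which forces `D = 0`.
A Hermitian solution commutes with `W`, so for `W = (γγᵀ)⁻¹` the equation becomes
`r + rγγᵀr = 1`. Then `M = 1 + γᵀrγ` satisfies `M² = M + γᵀγ`, which says exactly that `M⁻¹`
solves the quadratic equation for `(γᵀγ)⁻¹`.
-/

section Ring

variable {R : Type*} [Ring R]

theorem add_mul_mul_eq_one_of_mul_self_add_mul_eq {r W G : R} (h : r * r + r * W = W)
    (hc : Commute r W) (hWG : W * G = 1) (hGW : G * W = 1) : r + r * G * r = 1 := by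
  have hcG : Commute r G := hc.units_inv_right (u := ⟨W, G, hWG, hGW⟩)
  have h' := congrArg (· * G) h
  simp only [add_mul, mul_assoc, hWG, mul_one] at h'
  rw [mul_assoc, ← hcG.eq, add_comm, h']

theorem one_add_mul_mul_mul_self {r γ δ : R} (h : r + r * (γ * δ) * r = 1) :
    (1 + δ * r * γ) * (1 + δ * r * γ) = 1 + δ * r * γ + δ * γ :=
  calc _ = 1 + δ * r * γ + δ * (r + r * (γ * δ) * r) * γ := by noncomm_ring
    _ = _ := by rw [h, mul_one]

end Ring

namespace Matrix

section CommRing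

variable {n R : Type*} [Fintype n] [DecidableEq n] [CommRing R]

noncomputable def riccati (ϖ v : Matrix n n R) : Matrix n n R :=
  (1 + (ϖ + v)⁻¹)⁻¹

theorem eq_riccati_iff {W s : Matrix n n R} (hWs : IsUnit (W + s)) (hs : IsUnit s) :
    s = riccati W s ↔ s * s + s * W = W := by
  set X := 1 + (W + s)⁻¹
  have hsX : s * X * (W + s) = s * s + s * W + s := by
    rw [mul_assoc, add_mul, one_mul, nonsing_inv_mul _ ((isUnit_iff_isUnit_det _).mp hWs),
      mul_add, mul_one, mul_add, add_comm (s * W)]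
  have hinv : s = X⁻¹ ↔ s * X = 1 := by
    refine ⟨fun h => ?_, fun h => (inv_eq_left_inv h).symm⟩
    have hX : IsUnit X := isUnit_nonsing_inv_iff.mp (h ▸ hs)
    rw [h, nonsing_inv_mul _ ((isUnit_iff_isUnit_det _).mp hX)]
  rw [riccati, hinv, ← hWs.mul_left_inj, hsX, one_mul, add_left_inj]

theorem inv_mul_inv_add_inv_mul_inv_of_mul_self_eq_add {M A : Matrix n n R} (hM : IsUnit M)
    (hA : IsUnit A) (h : M * M = M + A) : M⁻¹ * M⁻¹ + M⁻¹ * A⁻¹ = A⁻¹ := by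
  have hM' := (isUnit_iff_isUnit_det _).mp hM
  have hA' := (isUnit_iff_isUnit_det _).mp hA
  symm
  calc A⁻¹ = M⁻¹ * M⁻¹ * (M * M) * A⁻¹ := by
        simp only [mul_assoc, nonsing_inv_mul_cancel_left _ _ hM']
    _ = M⁻¹ * M⁻¹ * (M + A) * A⁻¹ := by rw [h]
    _ = M⁻¹ * M⁻¹ + M⁻¹ * A⁻¹ := by
        simp only [mul_add, add_mul, mul_assoc, nonsing_inv_mul_cancel_left _ _ hM',
          mul_nonsing_inv _ hA', mul_one, add_comm]

end CommRing

theorem IsHermitian.commute_of_mul_self_add_mul_eq {n R : Type*} [Fintype n] [CommRing R]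
    [StarRing R] {s W : Matrix n n R} (hs : s.IsHermitian) (hW : W.IsHermitian)
    (h : s * s + s * W = W) : Commute s W := by
  have h' := congrArg (·ᴴ) h
  rw [conjTranspose_add, conjTranspose_mul, conjTranspose_mul, hs.eq, hW.eq] at h'
  exact add_left_cancel (h.trans h'.symm)

section RCLike

open scoped ComplexOrder

variable {𝕜 n m : Type*} [RCLike 𝕜] [Fintype n] [Fintype m]

theorem PosDef.eq_zero_of_mul_add_mul_eq_zero {A : Matrix n n 𝕜} {B : Matrix m m 𝕜}
    {X : Matrix n m 𝕜} (hA : A.PosDef) (hB : B.PosDef) (h : A * X + X * B = 0) : X = 0 := by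
  have hsum : (Xᴴ * A * X).trace + (X * B * Xᴴ).trace = 0 := by
    rw [Matrix.mul_assoc, trace_mul_comm (X * B), ← trace_add, ← Matrix.mul_add, h,
      Matrix.mul_zero, trace_zero]
  have hAX := hA.posSemidef.conjTranspose_mul_mul_same X
  have hBX := hB.posSemidef.mul_mul_conjTranspose_same X
  have hzero : Xᴴ * A * X = 0 := hAX.trace_eq_zero_iff.mp
    ((add_eq_zero_iff_of_nonneg hAX.trace_nonneg hBX.trace_nonneg).mp hsum).1
  refine ext_iff_mulVec.mpr fun v => ?_
  rw [zero_mulVec]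
  by_contra hv
  have hpos := hA.dotProduct_mulVec_pos hv
  have hquad : star (X *ᵥ v) ⬝ᵥ (A *ᵥ (X *ᵥ v)) = star v ⬝ᵥ ((Xᴴ * A * X) *ᵥ v) := by
    simp only [star_mulVec, dotProduct_mulVec, vecMul_vecMul, ← mulVec_mulVec]
  rw [hquad, hzero, zero_mulVec, dotProduct_zero] at hpos
  exact lt_irrefl _ hpos

theorem PosDef.eq_of_mul_self_add_mul_eq [DecidableEq n] {W s₁ s₂ : Matrix n n 𝕜}
    (hW : W.PosDef) (h₁ : s₁.PosDef) (h₂ : s₂.PosDef) (hq₁ : s₁ * s₁ + s₁ * W = W)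
    (hq₂ : s₂ * s₂ + s₂ * W = W) : s₁ = s₂ := by
  have hsyl : s₁ * (s₁ - s₂) + (s₁ - s₂) * (s₂ + W) = 0 :=
    calc _ = (s₁ * s₁ + s₁ * W) - (s₂ * s₂ + s₂ * W) := by noncomm_ring
      _ = 0 := by rw [hq₁, hq₂, sub_self]
  exact sub_eq_zero.mp (h₁.eq_zero_of_mul_add_mul_eq_zero (h₂.add hW) hsyl)

end RCLike

end Matrix

/-- If `r` is the (unique) positive definite fixed point of `Ricc_ϖ` with `ϖ = (γγᵀ)⁻¹` for an
invertible matrix `γ`, then `r̂` defined by `r̂⁻¹ = I + γᵀ r γ` is the unique positive definite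
fixed point of `Ricc_ϖ̄` with `ϖ̄ = (γᵀγ)⁻¹`. -/
theorem dual_riccati_fixed_point {d : ℕ} (γ r : Matrix (Fin d) (Fin d) ℝ)
    (hγ : IsUnit γ) (hr : r.PosDef)
    (hfix : r = (1 + ((γ * γᵀ)⁻¹ + r)⁻¹)⁻¹) :
    ((1 + γᵀ * r * γ)⁻¹).PosDef ∧
    (1 + γᵀ * r * γ)⁻¹ = (1 + ((γᵀ * γ)⁻¹ + (1 + γᵀ * r * γ)⁻¹)⁻¹)⁻¹ ∧
    ∀ s : Matrix (Fin d) (Fin d) ℝ, s.PosDef →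
      s = (1 + ((γᵀ * γ)⁻¹ + s)⁻¹)⁻¹ → s = (1 + γᵀ * r * γ)⁻¹ := by
  simp only [← conjTranspose_eq_transpose_of_trivial] at hfix ⊢
  have hγinj : Function.Injective γ.mulVec := mulVec_injective_iff_isUnit.mpr hγ
  have hG : (γ * γᴴ).PosDef := .mul_conjTranspose_self γ (vecMul_injective_iff_isUnit.mpr hγ)
  have hA : (γᴴ * γ).PosDef := .conjTranspose_mul_self γ hγinj
  have hGdet := (isUnit_iff_isUnit_det _).mp hG.isUnit
  have hq : r * r + r * (γ * γᴴ)⁻¹ = (γ * γᴴ)⁻¹ :=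
    (eq_riccati_iff (hG.inv.add hr).isUnit hr.isUnit).mp hfix
  have hrG : r + r * (γ * γᴴ) * r = 1 :=
    add_mul_mul_eq_one_of_mul_self_add_mul_eq hq
      (hr.1.commute_of_mul_self_add_mul_eq hG.inv.1 hq)
      (nonsing_inv_mul _ hGdet) (mul_nonsing_inv _ hGdet)
  have hM : (1 + γᴴ * r * γ).PosDef := .add .one (hr.conjTranspose_mul_mul_same hγinj)
  have hq' := inv_mul_inv_add_inv_mul_inv_of_mul_self_eq_add hM.isUnit hA.isUnit
    (one_add_mul_mul_mul_self hrG)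
  refine ⟨hM.inv, (eq_riccati_iff (hA.inv.add hM.inv).isUnit hM.inv.isUnit).mpr hq',
    fun s hs hsfix => ?_⟩
  exact hA.inv.eq_of_mul_self_add_mul_eq hs hM.inv
    ((eq_riccati_iff (hA.inv.add hs).isUnit hs.isUnit).mp hsfix) hq'
end

section
/- If ‖σ1 - σ2‖_F · ‖σ2^{-1}‖_F ≤ 1/2 for symmetric positive definite σ1, σ2, then the Burg divergence satisfies D(σ1|σ2) ≤ (5/2)·‖σ2^{-1}‖_F·‖σ1 - σ2‖_F, where D(σ1|σ2) = Tr(σ1 σ2^{-1} - I) - log det(σ1 σ2^{-1}). -/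
open Matrix

/-- The Frobenius norm of a real square matrix. -/
noncomputable def frob {d : ℕ} (A : Matrix (Fin d) (Fin d) ℝ) : ℝ :=
  Real.sqrt ((Aᵀ * A).trace)

/-!
Choose `G` with `Gᵀ σ₂ G = 1` and `G Gᵀ = σ₂⁻¹` (`G = B⁻¹` for a factorisation `σ₂ = Bᵀ B`).
Then `D(σ₁|σ₂) = D(N|1)` for the symmetric matrix `N = Gᵀ σ₁ G`, and `D(N|1) = ∑ (μᵢ - 1 - log μᵢ)`
over the eigenvalues `μᵢ` of `N`. With `Δ = σ₁ - σ₂` and `ε = ‖σ₂⁻¹ Δ‖_F ≤ 1/2`,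
`∑ (μᵢ - 1)² = tr((N - 1)²) = tr((σ₂⁻¹ Δ)²) ≤ ε²`, so every `μᵢ ≥ 1/2`, where
`μ - 1 - log μ ≤ 2 (μ - 1)²`. Hence `D(σ₁|σ₂) ≤ 2ε² ≤ ε ≤ ‖σ₂⁻¹‖_F ‖Δ‖_F`.
-/

open Unitary Finset

lemma Real.sub_one_sub_log_le_two_mul_sq {y : ℝ} (hy : 1 / 2 ≤ y) :
    y - 1 - Real.log y ≤ 2 * (y - 1) ^ 2 := by
  -- `log y ≥ 1 - 1/y` bounds the left side by `(y - 1)² / y`.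
  have hy₀ : 0 < y := by linarith
  have hlog := Real.one_sub_inv_le_log_of_pos hy₀
  have hinv : y * y⁻¹ = 1 := mul_inv_cancel₀ hy₀.ne'
  nlinarith [sq_nonneg (y - 1)]

namespace Matrix

variable {n : Type*} [Fintype n]

lemma trace_transpose_mul_self_nonneg (A : Matrix n n ℝ) : 0 ≤ (Aᵀ * A).trace := by
  simpa using (posSemidef_conjTranspose_mul_self A).trace_nonneg

lemma trace_mul_self_le_trace_transpose_mul_self (A : Matrix n n ℝ) :
    (A * A).trace ≤ (Aᵀ * A).trace := by
  -- `tr((A - Aᵀ)ᵀ (A - Aᵀ)) = 2 (tr(Aᵀ A) - tr(A A))`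
  have h := trace_transpose_mul_self_nonneg (A - Aᵀ)
  rw [transpose_sub, transpose_transpose, Matrix.sub_mul, Matrix.mul_sub, Matrix.mul_sub] at h
  simp only [trace_sub] at h
  rw [← transpose_mul, trace_transpose, trace_mul_comm A Aᵀ] at h
  linarith

lemma trace_transpose_mul_mul (G A : Matrix n n ℝ) :
    (Gᵀ * A * G).trace = (A * (G * Gᵀ)).trace := by
  rw [trace_mul_cycle, trace_mul_comm]

lemma trace_transpose_mul_mul_mul_self (G A : Matrix n n ℝ) :
    ((Gᵀ * A * G) * (Gᵀ * A * G)).trace = ((G * Gᵀ * A) * (G * Gᵀ * A)).trace := by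
  rw [show Gᵀ * A * G * (Gᵀ * A * G) = Gᵀ * (A * (G * Gᵀ) * A) * G by simp only [mul_assoc],
    trace_transpose_mul_mul, trace_mul_comm]
  simp only [mul_assoc]

variable [DecidableEq n]

lemma det_transpose_mul_mul (G A : Matrix n n ℝ) :
    (Gᵀ * A * G).det = (A * (G * Gᵀ)).det := by
  simp only [det_mul, det_transpose]
  ring

noncomputable def burgDivergence (σ₁ σ₂ : Matrix n n ℝ) : ℝ :=
  (σ₁ * σ₂⁻¹ - 1).trace - Real.log (σ₁ * σ₂⁻¹).det

lemma burgDivergence_eq_transpose_mul_mul {σ₁ σ₂ G : Matrix n n ℝ} (hG : G * Gᵀ = σ₂⁻¹) :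
    burgDivergence σ₁ σ₂ = burgDivergence (Gᵀ * σ₁ * G) 1 := by
  simp only [burgDivergence, inv_one, Matrix.mul_one, trace_sub, trace_transpose_mul_mul,
    det_transpose_mul_mul, hG]

lemma PosDef.exists_transpose_mul_mul_eq_one {S : Matrix n n ℝ} (hS : S.PosDef) :
    ∃ G : Matrix n n ℝ, Gᵀ * S * G = 1 ∧ G * Gᵀ = S⁻¹ := by
  open scoped MatrixOrder in
  obtain ⟨B, hB, rfl⟩ :=
    CStarAlgebra.isStrictlyPositive_iff_eq_star_mul_self.mp hS.isStrictlyPositive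
  have hB' : IsUnit B.det := (isUnit_iff_isUnit_det B).mp hB
  rw [star_eq_conjTranspose, conjTranspose_eq_transpose_of_trivial]
  refine ⟨B⁻¹, ?_, ?_⟩
  · rw [← mul_assoc, ← transpose_mul, mul_nonsing_inv _ hB', transpose_one, one_mul,
      mul_nonsing_inv _ hB']
  · rw [Matrix.mul_inv_rev, transpose_nonsing_inv]

lemma trace_conjStarAlgAut (u : unitary (Matrix n n ℝ)) (X : Matrix n n ℝ) :
    (conjStarAlgAut ℝ _ u X).trace = X.trace := by
  rw [conjStarAlgAut_apply, trace_mul_cycle, Unitary.coe_star_mul_self, Matrix.one_mul]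

namespace IsHermitian

variable {A : Matrix n n ℝ} (hA : A.IsHermitian)
include hA

lemma trace_sub_one : (A - 1).trace = ∑ i, (hA.eigenvalues i - 1) := by
  conv_lhs => rw [hA.spectral_theorem, ← map_one (conjStarAlgAut ℝ _ hA.eigenvectorUnitary),
    ← map_sub, trace_conjStarAlgAut]
  simp [← diagonal_one, diagonal_sub]

lemma trace_sub_one_mul_sub_one :
    ((A - 1) * (A - 1)).trace = ∑ i, (hA.eigenvalues i - 1) ^ 2 := by
  conv_lhs => rw [hA.spectral_theorem, ← map_one (conjStarAlgAut ℝ _ hA.eigenvectorUnitary),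
    ← map_sub, ← map_mul, trace_conjStarAlgAut]
  simp [← diagonal_one, diagonal_sub, sq]

lemma burgDivergence_one_le (h : ((A - 1) * (A - 1)).trace ≤ 1 / 4) :
    burgDivergence A 1 ≤ 2 * ((A - 1) * (A - 1)).trace := by
  rw [hA.trace_sub_one_mul_sub_one] at h ⊢
  have hμ : ∀ i, 1 / 2 ≤ hA.eigenvalues i := fun i => by
    have := single_le_sum (fun j _ => sq_nonneg (hA.eigenvalues j - 1)) (mem_univ i)
    nlinarith
  have hdet : A.det = ∏ i, hA.eigenvalues i := by simpa using hA.det_eq_prod_eigenvalues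
  rw [burgDivergence, inv_one, Matrix.mul_one, hA.trace_sub_one, hdet,
    Real.log_prod fun i _ => (by linarith [hμ i] : hA.eigenvalues i ≠ 0), ← sum_sub_distrib,
    mul_sum]
  exact sum_le_sum fun i _ => Real.sub_one_sub_log_le_two_mul_sq (hμ i)

end IsHermitian

end Matrix

section Frobenius

attribute [local instance] Matrix.frobeniusNormedAddCommGroup

lemma frob_eq_norm {d : ℕ} (A : Matrix (Fin d) (Fin d) ℝ) : frob A = ‖A‖ := by
  rw [frob, ← frobenius_norm_transpose, frobenius_norm_def, Real.sqrt_eq_rpow]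
  simp [trace, mul_apply, sq]

lemma frob_mul_le {d : ℕ} (A B : Matrix (Fin d) (Fin d) ℝ) : frob (A * B) ≤ frob A * frob B := by
  simpa only [frob_eq_norm] using frobenius_norm_mul A B

end Frobenius

lemma frob_nonneg {d : ℕ} (A : Matrix (Fin d) (Fin d) ℝ) : 0 ≤ frob A :=
  Real.sqrt_nonneg _

lemma trace_mul_self_le_frob_sq {d : ℕ} (A : Matrix (Fin d) (Fin d) ℝ) :
    (A * A).trace ≤ frob A ^ 2 := by
  rw [frob, Real.sq_sqrt (trace_transpose_mul_self_nonneg A)]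
  exact trace_mul_self_le_trace_transpose_mul_self A

/-- If `‖σ₁ - σ₂‖_F · ‖σ₂⁻¹‖_F ≤ 1/2` for symmetric positive definite `σ₁, σ₂`, then the Burg
divergence `D(σ₁|σ₂) = Tr(σ₁σ₂⁻¹ - I) - log det(σ₁σ₂⁻¹)` satisfies
`D(σ₁|σ₂) ≤ (5/2)·‖σ₂⁻¹‖_F·‖σ₁ - σ₂‖_F`. -/
theorem burg_divergence_estimate {d : ℕ} (σ₁ σ₂ : Matrix (Fin d) (Fin d) ℝ)
    (hσ₁ : σ₁.PosDef) (hσ₂ : σ₂.PosDef)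
    (h : frob (σ₁ - σ₂) * frob σ₂⁻¹ ≤ 1 / 2) :
    (σ₁ * σ₂⁻¹ - 1).trace - Real.log ((σ₁ * σ₂⁻¹).det) ≤
      (5 / 2) * frob σ₂⁻¹ * frob (σ₁ - σ₂) := by
  obtain ⟨G, hGσ₂, hGG⟩ := hσ₂.exists_transpose_mul_mul_eq_one
  set ε := frob (σ₂⁻¹ * (σ₁ - σ₂))
  have hε : ε ≤ frob σ₂⁻¹ * frob (σ₁ - σ₂) := frob_mul_le _ _
  have hε₀ : 0 ≤ ε := frob_nonneg _
  have hN : (Gᵀ * σ₁ * G).IsHermitian := by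
    simpa using isHermitian_conjTranspose_mul_mul G hσ₁.isHermitian
  have hsq : ((Gᵀ * σ₁ * G - 1) * (Gᵀ * σ₁ * G - 1)).trace ≤ ε ^ 2 := by
    rw [← hGσ₂, ← Matrix.sub_mul, ← Matrix.mul_sub, trace_transpose_mul_mul_mul_self, hGG]
    exact trace_mul_self_le_frob_sq _
  calc burgDivergence σ₁ σ₂ = burgDivergence (Gᵀ * σ₁ * G) 1 :=
        burgDivergence_eq_transpose_mul_mul hGG
    _ ≤ 2 * ((Gᵀ * σ₁ * G - 1) * (Gᵀ * σ₁ * G - 1)).trace :=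
        hN.burgDivergence_one_le (by nlinarith)
    _ ≤ (5 / 2) * frob σ₂⁻¹ * frob (σ₁ - σ₂) := by nlinarith
end

section
/- Under the Sinkhorn iteration, the sequence of iterates satisfies for all n ≥ 1: Ent(μ | π_{2n}) ∨ Ent(η | π_{2n+1}) ≤ (1/n)·Ent(P | P_0) for any coupling P of (η, μ) with finite relative entropy with respect to P_0, and n·Ent(μ|π_{2n}) → 0 as n → ∞. -/
open MeasureTheory

/-- The relative entropy (Kullback–Leibler divergence) `Ent(μ₁ | μ₂) = ∫ log(dμ₁/dμ₂) dμ₁`. -/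
noncomputable def Ent {α : Type*} [MeasurableSpace α] (μ₁ μ₂ : Measure α) : ℝ :=
  ∫ x, Real.log ((μ₁.rnDeriv μ₂ x).toReal) ∂μ₁

/-!
Write `a n = Ent(μ | π_{2n})` and `b n = Ent(η | π_{2n+1})`. Each Sinkhorn half-step is an
entropic projection, so for a coupling `Q` of `(η, μ)` the Pythagorean identity gives
`Ent(Q | P_0) = ∑_{l<n} (a l + b l) + Ent(Q | P_{2n}) ≥ ∑_{l<n} (a l + b l)`.
Both sequences are antitone: by the data processing inequality, applied once to each
half-step, `a (l+1) ≤ Ent(π_{2l+1} | η) ≤ a l` (and symmetrically for `b`). Hence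
`n a n ≤ ∑_{l<n} a l ≤ Ent(Q | P_0)`, and a summable antitone sequence is `o(1/n)`.
-/

open Filter InformationTheory
open scoped ENNReal Topology

section Entropy

variable {α β : Type*} [MeasurableSpace α] [MeasurableSpace β] {μ ν : Measure α}

lemma Ent_eq_toReal_klDiv [IsProbabilityMeasure μ] [IsProbabilityMeasure ν] (hμν : μ ≪ ν) :
    Ent μ ν = (klDiv μ ν).toReal :=
  (toReal_klDiv_of_measure_eq hμν (by simp)).symm

lemma Ent_nonneg [IsProbabilityMeasure μ] [IsProbabilityMeasure ν] (hμν : μ ≪ ν) :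
    0 ≤ Ent μ ν :=
  Ent_eq_toReal_klDiv hμν ▸ ENNReal.toReal_nonneg

lemma Ent_map_le [IsProbabilityMeasure μ] [IsProbabilityMeasure ν] {g : α → β}
    (hg : Measurable g) (hμν : μ ≪ ν) (hint : Integrable (llr μ ν) μ) :
    Ent (μ.map g) (ν.map g) ≤ Ent μ ν := by
  have := Measure.isProbabilityMeasure_map (μ := μ) hg.aemeasurable
  have := Measure.isProbabilityMeasure_map (μ := ν) hg.aemeasurable
  rw [Ent_eq_toReal_klDiv (hμν.map hg), Ent_eq_toReal_klDiv hμν]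
  exact ENNReal.toReal_mono (klDiv_ne_top hμν hint) (klDiv_map_le μ ν hg)

lemma llr_ae_eq_llr_add_llr [SigmaFinite μ] [SigmaFinite ν] {ρ : Measure α} [SigmaFinite ρ]
    (hμν : μ ≪ ν) (hνρ : ν ≪ ρ) : llr μ ρ =ᵐ[μ] llr μ ν + llr ν ρ := by
  filter_upwards [hμν.ae_le (Measure.rnDeriv_mul_rnDeriv' (μ := μ) hνρ),
    Measure.rnDeriv_pos hμν, hμν.ae_le (Measure.rnDeriv_lt_top μ ν),
    Measure.rnDeriv_pos (hμν.trans hνρ), (hμν.trans hνρ).ae_le (Measure.rnDeriv_lt_top μ ρ)]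
    with x hmul hμν0 hμνtop hμρ0 hμρtop
  rw [← hmul] at hμρ0 hμρtop
  simp only [llr, Pi.add_apply, ← hmul, Pi.mul_apply, ENNReal.toReal_mul]
  have hνρ0 : ν.rnDeriv ρ x ≠ 0 := right_ne_zero_of_mul (pos_iff_ne_zero.1 hμρ0)
  have hνρtop : ν.rnDeriv ρ x ≠ ∞ := fun h => by simp [h, hμν0.ne'] at hμρtop
  exact Real.log_mul (ENNReal.toReal_ne_zero.2 ⟨hμν0.ne', hμνtop.ne⟩)
    (ENNReal.toReal_ne_zero.2 ⟨hνρ0, hνρtop⟩)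

end Entropy

lemma integrable_and_integral_eq_of_ae_eq_comp {γ ε : Type*} [MeasurableSpace γ]
    [MeasurableSpace ε] {μ : Measure γ} {S : γ → ε} (hS : Measurable S) {f : ε → ℝ}
    (hf : StronglyMeasurable f) (hfi : Integrable f (μ.map S)) {g : γ → ℝ}
    (hg : g =ᵐ[μ] f ∘ S) :
    Integrable g μ ∧ ∫ x, g x ∂μ = ∫ y, f y ∂(μ.map S) := by
  refine ⟨((integrable_map_measure hf.aestronglyMeasurable hS.aemeasurable).1 hfi).congr
    hg.symm, ?_⟩
  rw [integral_congr_ae hg, integral_map hS.aemeasurable hf.aestronglyMeasurable]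
  rfl

section FitMarginal

variable {γ ε δ : Type*} [MeasurableSpace γ] [MeasurableSpace ε] [MeasurableSpace δ]

/-- The Sinkhorn half-step: the entropic projection of `P` onto the measures with `S`-marginal
`ν`. -/
noncomputable def fitMarginal (P : Measure γ) (S : γ → ε) (ν : Measure ε) : Measure γ :=
  P.withDensity fun z => ν.rnDeriv (P.map S) (S z)

variable {P Q : Measure γ} {S : γ → ε} {ν : Measure ε}

lemma fitMarginal_absolutelyContinuous : fitMarginal P S ν ≪ P :=
  withDensity_absolutelyContinuous _ _

lemma map_fitMarginal [IsFiniteMeasure P] [SigmaFinite ν] (hS : Measurable S)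
    (hν : ν ≪ P.map S) : (fitMarginal P S ν).map S = ν := by
  ext s hs
  rw [Measure.map_apply hS hs, fitMarginal, withDensity_apply _ (hS hs),
    ← setLIntegral_map hs (Measure.measurable_rnDeriv _ _) hS, ← withDensity_apply _ hs,
    Measure.withDensity_rnDeriv_eq _ _ hν]

lemma isProbabilityMeasure_fitMarginal [IsFiniteMeasure P] [IsProbabilityMeasure ν]
    (hS : Measurable S) (hν : ν ≪ P.map S) : IsProbabilityMeasure (fitMarginal P S ν) := by
  rw [← Measure.isProbabilityMeasure_map_iff hS.aemeasurable, map_fitMarginal hS hν]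
  infer_instance

lemma absolutelyContinuous_fitMarginal [IsFiniteMeasure P] [SigmaFinite ν] (hS : Measurable S)
    (hν : ν ≪ P.map S) (hQP : Q ≪ P) (hQS : Q.map S ≪ ν) : Q ≪ fitMarginal P S ν := by
  have hpos : ∀ᵐ z ∂Q, ν.rnDeriv (P.map S) (S z) ≠ 0 :=
    ae_of_ae_map hS.aemeasurable (hQS.ae_le ((Measure.rnDeriv_pos hν).mono fun _ h => h.ne'))
  have hw : Measurable fun z => ν.rnDeriv (P.map S) (S z) :=
    (Measure.measurable_rnDeriv _ _).comp hS
  refine Measure.AbsolutelyContinuous.mk fun s _ hs0 => ?_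
  rw [fitMarginal, withDensity_apply_eq_zero hw] at hs0
  rw [← measure_inter_conull (t := {z | ν.rnDeriv (P.map S) (S z) ≠ 0}) hpos, Set.inter_comm]
  exact hQP hs0

lemma llr_fitMarginal_left [IsFiniteMeasure P] (hS : Measurable S) :
    llr (fitMarginal P S ν) P =ᵐ[P] llr ν (P.map S) ∘ S := by
  filter_upwards [Measure.rnDeriv_withDensity P (f := fun z => ν.rnDeriv (P.map S) (S z))
    ((Measure.measurable_rnDeriv _ _).comp hS)] with z hz
  simp only [llr, fitMarginal, hz, Function.comp_apply]

variable [IsProbabilityMeasure P] [IsProbabilityMeasure ν]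

lemma llr_fitMarginal_right (hS : Measurable S) (hν : ν ≪ P.map S) (hPν : P.map S ≪ ν) :
    llr P (fitMarginal P S ν) =ᵐ[P] llr (P.map S) ν ∘ S := by
  have := isProbabilityMeasure_fitMarginal hS hν
  have hPP' : P ≪ fitMarginal P S ν := absolutelyContinuous_fitMarginal hS hν .rfl hPν
  filter_upwards [neg_llr hPP', llr_fitMarginal_left hS,
    ae_of_ae_map hS.aemeasurable (neg_llr hPν)] with z h₁ h₂ h₃
  simp only [Pi.neg_apply, Function.comp_apply] at h₁ h₂ h₃ ⊢
  rw [← neg_neg (llr P _ z), h₁, h₂, ← h₃, neg_neg]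

lemma Ent_fitMarginal_left (hS : Measurable S) (hν : ν ≪ P.map S)
    (hνint : Integrable (llr ν (P.map S)) ν) :
    Integrable (llr (fitMarginal P S ν) P) (fitMarginal P S ν) ∧
      Ent (fitMarginal P S ν) P = Ent ν (P.map S) := by
  have h := integrable_and_integral_eq_of_ae_eq_comp (μ := fitMarginal P S ν) hS
    (stronglyMeasurable_llr ν (P.map S))
    (by rwa [map_fitMarginal hS hν]) (fitMarginal_absolutelyContinuous.ae_le
      (llr_fitMarginal_left (ν := ν) hS))
  rwa [map_fitMarginal hS hν] at h

lemma Ent_fitMarginal_right (hS : Measurable S) (hν : ν ≪ P.map S) (hPν : P.map S ≪ ν)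
    (hint : Integrable (llr (P.map S) ν) (P.map S)) :
    Integrable (llr P (fitMarginal P S ν)) P ∧ Ent P (fitMarginal P S ν) = Ent (P.map S) ν :=
  integrable_and_integral_eq_of_ae_eq_comp hS (stronglyMeasurable_llr _ _) hint
    (llr_fitMarginal_right hS hν hPν)

lemma Ent_eq_Ent_fitMarginal_add [IsProbabilityMeasure Q] (hS : Measurable S)
    (hν : ν ≪ P.map S) (hQP' : Q ≪ fitMarginal P S ν) (hQS : Q.map S = ν)
    (hQint : Integrable (llr Q P) Q) (hνint : Integrable (llr ν (P.map S)) ν) :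
    Integrable (llr Q (fitMarginal P S ν)) Q ∧
      Ent Q P = Ent Q (fitMarginal P S ν) + Ent ν (P.map S) := by
  have := isProbabilityMeasure_fitMarginal hS hν
  have hQP : Q ≪ P := hQP'.trans fitMarginal_absolutelyContinuous
  have hsplit : llr Q P =ᵐ[Q] llr Q (fitMarginal P S ν) + llr ν (P.map S) ∘ S :=
    (llr_ae_eq_llr_add_llr hQP' fitMarginal_absolutelyContinuous).trans
      (EventuallyEq.rfl.add (hQP.ae_le (llr_fitMarginal_left hS)))
  obtain ⟨hint, hEnt⟩ := integrable_and_integral_eq_of_ae_eq_comp hS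
    (stronglyMeasurable_llr _ _) (by rwa [hQS]) (EventuallyEq.refl _ (llr ν (P.map S) ∘ S))
  have hint' : Integrable (llr Q (fitMarginal P S ν)) Q :=
    (hQint.sub hint).congr (hsplit.mono fun z hz => by simp [hz])
  refine ⟨hint', ?_⟩
  rw [Ent, ← llr_def, integral_congr_ae hsplit, integral_add' hint' hint, hEnt, hQS]
  rfl

variable {T : γ → δ}

lemma Ent_map_fitMarginal_fitMarginal_le (hS : Measurable S) (hT : Measurable T)
    (hν : ν ≪ P.map S) (hνint : Integrable (llr ν (P.map S)) ν)
    (hT' : P.map T ≪ (fitMarginal P S ν).map T) :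
    Ent ν ((fitMarginal (fitMarginal P S ν) T (P.map T)).map S) ≤ Ent ν (P.map S) := by
  set P' := fitMarginal P S ν
  have := isProbabilityMeasure_fitMarginal hS hν
  have := Measure.isProbabilityMeasure_map (μ := P) hT.aemeasurable
  have := isProbabilityMeasure_fitMarginal hT hT'
  have hP'P : P' ≪ P := fitMarginal_absolutelyContinuous
  obtain ⟨hint, hEnt⟩ := Ent_fitMarginal_left hS hν hνint
  obtain ⟨hint', hEnt'⟩ := Ent_fitMarginal_right hT hT' (hP'P.map hT)
    (integrable_llr_map hP'P hT hint)
  calc Ent ν ((fitMarginal P' T (P.map T)).map S)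
      = Ent (P'.map S) ((fitMarginal P' T (P.map T)).map S) := by
        rw [map_fitMarginal hS hν]
    _ ≤ Ent P' (fitMarginal P' T (P.map T)) :=
        Ent_map_le hS (absolutelyContinuous_fitMarginal hT hT' .rfl (hP'P.map hT)) hint'
    _ = Ent (P'.map T) (P.map T) := hEnt'
    _ ≤ Ent P' P := Ent_map_le hT hP'P hint
    _ = Ent ν (P.map S) := hEnt

end FitMarginal

lemma Antitone.nat_mul_le_sum_range {f : ℕ → ℝ} (hf : Antitone f) (n : ℕ) :
    n * f n ≤ ∑ l ∈ Finset.range n, f l := by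
  simpa using Finset.card_nsmul_le_sum (Finset.range n) f (f n)
    fun l hl => hf (Finset.mem_range.1 hl).le

lemma Antitone.tendsto_nat_mul_of_summable {f : ℕ → ℝ} (hf : Antitone f) (h0 : ∀ n, 0 ≤ f n)
    (hs : Summable f) : Tendsto (fun n : ℕ => n * f n) atTop (𝓝 0) := by
  have htail : Tendsto (fun n => 2 * (∑ l ∈ Finset.range n, f l -
      ∑ l ∈ Finset.range (n / 2), f l)) atTop (𝓝 0) := by
    have h := hs.tendsto_sum_tsum_nat
    simpa using ((h.sub (h.comp (Nat.tendsto_div_const_atTop two_ne_zero))).const_mul 2)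
  -- `n f n ≤ 2 ∑_{n/2 ≤ l < n} f l`, twice a tail of the convergent series
  refine squeeze_zero (fun n => mul_nonneg n.cast_nonneg (h0 n)) (fun n => ?_) htail
  have hhalf : (n : ℝ) ≤ 2 * (n - n / 2 : ℕ) := by
    exact_mod_cast (by omega : n ≤ 2 * (n - n / 2))
  rw [← Finset.sum_Ico_eq_sub _ (Nat.div_le_self n 2)]
  calc (n : ℝ) * f n ≤ 2 * ((n - n / 2 : ℕ) * f n) := by nlinarith [h0 n]
    _ ≤ 2 * ∑ l ∈ Finset.Ico (n / 2) n, f l := by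
      gcongr
      simpa using Finset.card_nsmul_le_sum (Finset.Ico (n / 2) n) f (f n)
        fun l hl => hf (Finset.mem_Ico.1 hl).2.le

section Sinkhorn

variable {α β : Type*} [MeasurableSpace α] [MeasurableSpace β]

structure IsSinkhornSequence (η : Measure α) (μ : Measure β) (P : ℕ → Measure (α × β)) :
    Prop where
  isProbabilityMeasure : ∀ n, IsProbabilityMeasure (P n)
  map_fst_even : ∀ n, (P (2 * n)).map Prod.fst = η
  odd_eq : ∀ n, P (2 * n + 1) = fitMarginal (P (2 * n)) Prod.snd μ
  even_succ_eq : ∀ n, P (2 * n + 2) = fitMarginal (P (2 * n + 1)) Prod.fst η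
  absolutelyContinuous_snd : ∀ n, μ ≪ (P (2 * n)).map Prod.snd
  absolutelyContinuous_fst : ∀ n, η ≪ (P (2 * n + 1)).map Prod.fst
  integrable_llr_snd : ∀ n, Integrable (llr μ ((P (2 * n)).map Prod.snd)) μ
  integrable_llr_fst : ∀ n, Integrable (llr η ((P (2 * n + 1)).map Prod.fst)) η

namespace IsSinkhornSequence

variable {η : Measure α} {μ : Measure β} {P : ℕ → Measure (α × β)}

lemma map_snd_odd [IsProbabilityMeasure μ] (hP : IsSinkhornSequence η μ P) (n : ℕ) :
    (P (2 * n + 1)).map Prod.snd = μ := by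
  have := hP.isProbabilityMeasure (2 * n)
  rw [hP.odd_eq]
  exact map_fitMarginal measurable_snd (hP.absolutelyContinuous_snd n)

lemma antitone_Ent_snd [IsProbabilityMeasure μ] (hP : IsSinkhornSequence η μ P) :
    Antitone fun n => Ent μ ((P (2 * n)).map Prod.snd) := by
  refine antitone_nat_of_succ_le fun n => ?_
  have := hP.isProbabilityMeasure (2 * n)
  have h := Ent_map_fitMarginal_fitMarginal_le measurable_snd measurable_fst
    (hP.absolutelyContinuous_snd n) (hP.integrable_llr_snd n)
    (by rw [← hP.odd_eq, hP.map_fst_even]; exact hP.absolutelyContinuous_fst n)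
  rwa [← hP.odd_eq, hP.map_fst_even, ← hP.even_succ_eq] at h

lemma antitone_Ent_fst [IsProbabilityMeasure η] [IsProbabilityMeasure μ]
    (hP : IsSinkhornSequence η μ P) :
    Antitone fun n => Ent η ((P (2 * n + 1)).map Prod.fst) := by
  refine antitone_nat_of_succ_le fun n => ?_
  have := hP.isProbabilityMeasure (2 * n + 1)
  have h := Ent_map_fitMarginal_fitMarginal_le measurable_fst measurable_snd
    (hP.absolutelyContinuous_fst n) (hP.integrable_llr_fst n)
    (by rw [← hP.even_succ_eq, hP.map_snd_odd]; exact hP.absolutelyContinuous_snd (n + 1))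
  rw [← hP.even_succ_eq, hP.map_snd_odd] at h
  rwa [hP.odd_eq (n + 1)]

lemma Ent_snd_nonneg [IsProbabilityMeasure μ] (hP : IsSinkhornSequence η μ P) (n : ℕ) :
    0 ≤ Ent μ ((P (2 * n)).map Prod.snd) := by
  have := hP.isProbabilityMeasure (2 * n)
  have := Measure.isProbabilityMeasure_map (μ := P (2 * n)) measurable_snd.aemeasurable
  exact Ent_nonneg (hP.absolutelyContinuous_snd n)

lemma Ent_fst_nonneg [IsProbabilityMeasure η] (hP : IsSinkhornSequence η μ P) (n : ℕ) :
    0 ≤ Ent η ((P (2 * n + 1)).map Prod.fst) := by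
  have := hP.isProbabilityMeasure (2 * n + 1)
  have := Measure.isProbabilityMeasure_map (μ := P (2 * n + 1)) measurable_fst.aemeasurable
  exact Ent_nonneg (hP.absolutelyContinuous_fst n)

variable [IsProbabilityMeasure η] [IsProbabilityMeasure μ] {Q : Measure (α × β)}
  [IsProbabilityMeasure Q]

lemma Ent_eq_sum_add (hP : IsSinkhornSequence η μ P) (hQX : Q.map Prod.fst = η)
    (hQY : Q.map Prod.snd = μ) (hQ : Q ≪ P 0) (hQint : Integrable (llr Q (P 0)) Q) (n : ℕ) :
    Q ≪ P (2 * n) ∧ Integrable (llr Q (P (2 * n))) Q ∧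
      Ent Q (P 0) = ∑ l ∈ Finset.range n, (Ent μ ((P (2 * l)).map Prod.snd) +
        Ent η ((P (2 * l + 1)).map Prod.fst)) + Ent Q (P (2 * n)) := by
  induction n with
  | zero => simpa using ⟨hQ, hQint⟩
  | succ n ih =>
    obtain ⟨hac, hint, hEnt⟩ := ih
    have := hP.isProbabilityMeasure (2 * n)
    have := hP.isProbabilityMeasure (2 * n + 1)
    have hac₁ : Q ≪ P (2 * n + 1) := hP.odd_eq n ▸ absolutelyContinuous_fitMarginal
      measurable_snd (hP.absolutelyContinuous_snd n) hac (hQY ▸ .rfl)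
    have hac₂ : Q ≪ P (2 * n + 2) := hP.even_succ_eq n ▸ absolutelyContinuous_fitMarginal
      measurable_fst (hP.absolutelyContinuous_fst n) hac₁ (hQX ▸ .rfl)
    obtain ⟨hint₁, hEnt₁⟩ := Ent_eq_Ent_fitMarginal_add measurable_snd
      (hP.absolutelyContinuous_snd n) (hP.odd_eq n ▸ hac₁) hQY hint (hP.integrable_llr_snd n)
    rw [← hP.odd_eq] at hint₁ hEnt₁
    obtain ⟨hint₂, hEnt₂⟩ := Ent_eq_Ent_fitMarginal_add measurable_fst
      (hP.absolutelyContinuous_fst n) (hP.even_succ_eq n ▸ hac₂) hQX hint₁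
      (hP.integrable_llr_fst n)
    rw [← hP.even_succ_eq] at hint₂ hEnt₂
    rw [mul_add_one, Finset.sum_range_succ, hEnt, hEnt₁, hEnt₂]
    exact ⟨hac₂, hint₂, by ring⟩

lemma sum_Ent_le (hP : IsSinkhornSequence η μ P) (hQX : Q.map Prod.fst = η)
    (hQY : Q.map Prod.snd = μ) (hQ : Q ≪ P 0) (hQint : Integrable (llr Q (P 0)) Q) (n : ℕ) :
    ∑ l ∈ Finset.range n, (Ent μ ((P (2 * l)).map Prod.snd) +
      Ent η ((P (2 * l + 1)).map Prod.fst)) ≤ Ent Q (P 0) := by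
  obtain ⟨hac, -, hEnt⟩ := hP.Ent_eq_sum_add hQX hQY hQ hQint n
  have := hP.isProbabilityMeasure (2 * n)
  linarith [Ent_nonneg hac]

lemma nat_mul_Ent_le (hP : IsSinkhornSequence η μ P) (hQX : Q.map Prod.fst = η)
    (hQY : Q.map Prod.snd = μ) (hQ : Q ≪ P 0) (hQint : Integrable (llr Q (P 0)) Q) (n : ℕ) :
    n * Ent μ ((P (2 * n)).map Prod.snd) ≤ Ent Q (P 0) ∧
      n * Ent η ((P (2 * n + 1)).map Prod.fst) ≤ Ent Q (P 0) := by
  have hsum := hP.sum_Ent_le hQX hQY hQ hQint n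
  constructor
  · calc _ ≤ ∑ l ∈ Finset.range n, Ent μ ((P (2 * l)).map Prod.snd) :=
          hP.antitone_Ent_snd.nat_mul_le_sum_range n
      _ ≤ _ := Finset.sum_le_sum fun l _ => le_add_of_nonneg_right (hP.Ent_fst_nonneg l)
      _ ≤ _ := hsum
  · calc _ ≤ ∑ l ∈ Finset.range n, Ent η ((P (2 * l + 1)).map Prod.fst) :=
          hP.antitone_Ent_fst.nat_mul_le_sum_range n
      _ ≤ _ := Finset.sum_le_sum fun l _ => le_add_of_nonneg_left (hP.Ent_snd_nonneg l)
      _ ≤ _ := hsum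

lemma tendsto_nat_mul_Ent_snd (hP : IsSinkhornSequence η μ P) (hQX : Q.map Prod.fst = η)
    (hQY : Q.map Prod.snd = μ) (hQ : Q ≪ P 0) (hQint : Integrable (llr Q (P 0)) Q) :
    Tendsto (fun n : ℕ => n * Ent μ ((P (2 * n)).map Prod.snd)) atTop (𝓝 0) := by
  have hsum := summable_of_sum_range_le
    (fun l => add_nonneg (hP.Ent_snd_nonneg l) (hP.Ent_fst_nonneg l))
    (hP.sum_Ent_le hQX hQY hQ hQint)
  exact hP.antitone_Ent_snd.tendsto_nat_mul_of_summable hP.Ent_snd_nonneg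
    (hsum.of_nonneg_of_le hP.Ent_snd_nonneg
      fun l => le_add_of_nonneg_right (hP.Ent_fst_nonneg l))

end IsSinkhornSequence

end Sinkhorn

theorem sinkhorn_sublinear_rates_general {d : ℕ}
    (η μ : Measure (Fin d → ℝ)) [IsProbabilityMeasure η] [IsProbabilityMeasure μ]
    (P : ℕ → Measure ((Fin d → ℝ) × (Fin d → ℝ)))
    (hP : ∀ n, IsProbabilityMeasure (P n))
    (π : ℕ → Measure (Fin d → ℝ))
    (hπeven : ∀ n, π (2 * n) = (P (2 * n)).map Prod.snd)
    (hπodd : ∀ n, π (2 * n + 1) = (P (2 * n + 1)).map Prod.fst)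
    (hmargX : ∀ n, (P (2 * n)).map Prod.fst = η)
    (hupd1 : ∀ n, P (2 * n + 1) =
      (P (2 * n)).withDensity fun p => μ.rnDeriv (π (2 * n)) p.2)
    (hupd2 : ∀ n, P (2 * n + 2) =
      (P (2 * n + 1)).withDensity fun p => η.rnDeriv (π (2 * n + 1)) p.1)
    (hacμ : ∀ n, μ ≪ π (2 * n)) (hacη : ∀ n, η ≪ π (2 * n + 1))
    (hintμ : ∀ n, Integrable (fun y => Real.log ((μ.rnDeriv (π (2 * n)) y).toReal)) μ)
    (hintη : ∀ n, Integrable (fun x => Real.log ((η.rnDeriv (π (2 * n + 1)) x).toReal)) η)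
    (Q : Measure ((Fin d → ℝ) × (Fin d → ℝ))) [IsProbabilityMeasure Q]
    (hQX : Q.map Prod.fst = η) (hQY : Q.map Prod.snd = μ)
    (hQac : Q ≪ P 0)
    (hQint : Integrable (fun p => Real.log ((Q.rnDeriv (P 0) p).toReal)) Q) :
    (∀ n : ℕ, 1 ≤ n →
      max (Ent μ (π (2 * n))) (Ent η (π (2 * n + 1))) ≤ (1 / (n : ℝ)) * Ent Q (P 0)) ∧
    Filter.Tendsto (fun n : ℕ => (n : ℝ) * Ent μ (π (2 * n))) Filter.atTop (nhds 0) := by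
  have hS : IsSinkhornSequence η μ P :=
    { isProbabilityMeasure := hP
      map_fst_even := hmargX
      odd_eq := fun n => by rw [hupd1, hπeven]; rfl
      even_succ_eq := fun n => by rw [hupd2, hπodd]; rfl
      absolutelyContinuous_snd := fun n => hπeven n ▸ hacμ n
      absolutelyContinuous_fst := fun n => hπodd n ▸ hacη n
      integrable_llr_snd := fun n => hπeven n ▸ hintμ n
      integrable_llr_fst := fun n => hπodd n ▸ hintη n }
  simp only [hπeven, hπodd]
  refine ⟨fun n hn => ?_, hS.tendsto_nat_mul_Ent_snd hQX hQY hQac hQint⟩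
  obtain ⟨hμn, hηn⟩ := hS.nat_mul_Ent_le hQX hQY hQac hQint n
  rw [one_div, inv_mul_eq_div, le_div_iff₀' (by exact_mod_cast hn),
    mul_max_of_nonneg _ _ n.cast_nonneg]
  exact max_le hμn hηn

/-- Under the Sinkhorn iteration (with iterates `P n` on `ℝ^d × ℝ^d` and marginals
`π (2n) = (P (2n)).map Prod.snd`, `π (2n+1) = (P (2n+1)).map Prod.fst`), for all `n ≥ 1`
one has `Ent(μ | π_{2n}) ⊔ Ent(η | π_{2n+1}) ≤ (1/n)·Ent(Q | P_0)` for any coupling `Q` of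
`(η, μ)` with finite relative entropy with respect to `P_0`, and `n·Ent(μ | π_{2n}) → 0`. -/
theorem sinkhorn_sublinear_rates {d : ℕ}
    (η μ : Measure (Fin d → ℝ)) [IsProbabilityMeasure η] [IsProbabilityMeasure μ]
    (P : ℕ → Measure ((Fin d → ℝ) × (Fin d → ℝ)))
    (hP : ∀ n, IsProbabilityMeasure (P n))
    (π : ℕ → Measure (Fin d → ℝ))
    (hπeven : ∀ n, π (2 * n) = (P (2 * n)).map Prod.snd)
    (hπodd : ∀ n, π (2 * n + 1) = (P (2 * n + 1)).map Prod.fst)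
    (hmargX : ∀ n, (P (2 * n)).map Prod.fst = η)
    (hmargY : ∀ n, (P (2 * n + 1)).map Prod.snd = μ)
    (hupd1 : ∀ n, P (2 * n + 1) =
      (P (2 * n)).withDensity fun p => μ.rnDeriv (π (2 * n)) p.2)
    (hupd2 : ∀ n, P (2 * n + 2) =
      (P (2 * n + 1)).withDensity fun p => η.rnDeriv (π (2 * n + 1)) p.1)
    (hacμ : ∀ n, μ ≪ π (2 * n)) (hacη : ∀ n, η ≪ π (2 * n + 1))
    (hintμ : ∀ n, Integrable (fun y => Real.log ((μ.rnDeriv (π (2 * n)) y).toReal)) μ)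
    (hintη : ∀ n, Integrable (fun x => Real.log ((η.rnDeriv (π (2 * n + 1)) x).toReal)) η)
    (Q : Measure ((Fin d → ℝ) × (Fin d → ℝ))) [IsProbabilityMeasure Q]
    (hQX : Q.map Prod.fst = η) (hQY : Q.map Prod.snd = μ)
    (hQac : Q ≪ P 0)
    (hQint : Integrable (fun p => Real.log ((Q.rnDeriv (P 0) p).toReal)) Q) :
    (∀ n : ℕ, 1 ≤ n →
      max (Ent μ (π (2 * n))) (Ent η (π (2 * n + 1))) ≤ (1 / (n : ℝ)) * Ent Q (P 0)) ∧
    Filter.Tendsto (fun n : ℕ => (n : ℝ) * Ent μ (π (2 * n))) Filter.atTop (nhds 0) :=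
  sinkhorn_sublinear_rates_general η μ P hP π hπeven hπodd hmargX hupd1 hupd2 hacμ hacη hintμ hintη
    Q hQX hQY hQac hQint
end

section
/- For the Gaussian Sinkhorn iteration, the gain matrices satisfy β_{2n} = τ_{2n} τ^{-1} β and β_{2n+1} = τ_{2n+1} β' τ^{-1} for all n ≥ 0; equivalently, the commutation relations τ_{2n+1}^{-1} β_{2n+1} = β_{2n}' τ_{2n}^{-1} and τ_{2(n+1)}^{-1} β_{2(n+1)} = β_{2n+1}' τ_{2n+1}^{-1} hold. -/
open Matrix

lemma sinkhorn_key {d : ℕ} {σ τ : Matrix (Fin d) (Fin d) ℝ} (β : Matrix (Fin d) (Fin d) ℝ)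
    (hσ : σ.PosDef) (hτ : τ.PosDef) :
    (σ⁻¹ + βᵀ * τ⁻¹ * β).PosDef ∧
    (σ⁻¹ + βᵀ * τ⁻¹ * β) * (σ * βᵀ * (β * σ * βᵀ + τ)⁻¹) = βᵀ * τ⁻¹ := by
  have hPSD : (βᵀ * τ⁻¹ * β).PosSemidef := by
    rw [← conjTranspose_eq_transpose_of_trivial β]
    exact hτ.inv.posSemidef.conjTranspose_mul_mul_same β
  have hsum : (σ⁻¹ + βᵀ * τ⁻¹ * β).PosDef := hσ.inv.add_posSemidef hPSD
  have hS : (β * σ * βᵀ + τ).PosDef := by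
    have h1 : (β * σ * βᵀ).PosSemidef := by
      rw [← conjTranspose_eq_transpose_of_trivial β]
      exact hσ.posSemidef.mul_mul_conjTranspose_same β
    exact Matrix.PosDef.posSemidef_add h1 hτ
  refine ⟨hsum, ?_⟩
  have h1 : σ⁻¹ * σ = 1 := nonsing_inv_mul σ hσ.det_pos.ne'.isUnit
  have h2 : τ⁻¹ * τ = 1 := nonsing_inv_mul τ hτ.det_pos.ne'.isUnit
  have key : (σ⁻¹ + βᵀ * τ⁻¹ * β) * (σ * βᵀ) = βᵀ * τ⁻¹ * (β * σ * βᵀ + τ) := by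
    have e1 : σ⁻¹ * (σ * βᵀ) = βᵀ := by rw [← Matrix.mul_assoc, h1, Matrix.one_mul]
    have e2 : βᵀ * τ⁻¹ * τ = βᵀ := by rw [Matrix.mul_assoc, h2, Matrix.mul_one]
    rw [add_mul, mul_add, e1, e2]
    simp [Matrix.mul_assoc, add_comm]
  calc (σ⁻¹ + βᵀ * τ⁻¹ * β) * (σ * βᵀ * (β * σ * βᵀ + τ)⁻¹)
      = (σ⁻¹ + βᵀ * τ⁻¹ * β) * (σ * βᵀ) * (β * σ * βᵀ + τ)⁻¹ :=
        (Matrix.mul_assoc _ _ _).symm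
    _ = βᵀ * τ⁻¹ * (β * σ * βᵀ + τ) * (β * σ * βᵀ + τ)⁻¹ := by rw [key]
    _ = βᵀ * τ⁻¹ := mul_nonsing_inv_cancel_right _ _ hS.det_pos.ne'.isUnit

lemma posDef_transpose_eq {d : ℕ} {M : Matrix (Fin d) (Fin d) ℝ} (hM : M.PosDef) : Mᵀ = M := by
  rw [← conjTranspose_eq_transpose_of_trivial, hM.isHermitian.eq]

/-- For the Gaussian Sinkhorn iteration, the gain matrices satisfy
`β_{2n} = τ_{2n} τ⁻¹ β` and `β_{2n+1} = τ_{2n+1} βᵀ τ⁻¹` for all `n ≥ 0`; equivalently the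
commutation relations `τ_{2n+1}⁻¹ β_{2n+1} = β_{2n}ᵀ τ_{2n}⁻¹` and
`τ_{2(n+1)}⁻¹ β_{2(n+1)} = β_{2n+1}ᵀ τ_{2n+1}⁻¹` hold. -/
theorem gaussian_sinkhorn_gain_matrices {d : ℕ}
    (σ σbar : Matrix (Fin d) (Fin d) ℝ) (hσ : σ.PosDef) (hσbar : σbar.PosDef)
    (β τ : ℕ → Matrix (Fin d) (Fin d) ℝ)
    (hβ0 : IsUnit (β 0)) (hτ0 : (τ 0).PosDef)
    (hβodd : ∀ n, β (2 * n + 1) =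
      σ * (β (2 * n))ᵀ * (β (2 * n) * σ * (β (2 * n))ᵀ + τ (2 * n))⁻¹)
    (hτodd : ∀ n, τ (2 * n + 1) = (σ⁻¹ + (β (2 * n))ᵀ * (τ (2 * n))⁻¹ * β (2 * n))⁻¹)
    (hβeven : ∀ n, β (2 * n + 2) =
      σbar * (β (2 * n + 1))ᵀ * (β (2 * n + 1) * σbar * (β (2 * n + 1))ᵀ + τ (2 * n + 1))⁻¹)
    (hτeven : ∀ n, τ (2 * n + 2) =
      (σbar⁻¹ + (β (2 * n + 1))ᵀ * (τ (2 * n + 1))⁻¹ * β (2 * n + 1))⁻¹) :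
    ∀ n : ℕ,
      β (2 * n) = τ (2 * n) * (τ 0)⁻¹ * β 0 ∧
      β (2 * n + 1) = τ (2 * n + 1) * (β 0)ᵀ * (τ 0)⁻¹ ∧
      (τ (2 * n + 1))⁻¹ * β (2 * n + 1) = (β (2 * n))ᵀ * (τ (2 * n))⁻¹ ∧
      (τ (2 * n + 2))⁻¹ * β (2 * n + 2) = (β (2 * n + 1))ᵀ * (τ (2 * n + 1))⁻¹ := by
  -- symmetry of `(τ 0)⁻¹`
  have hτ0symm : ((τ 0)⁻¹)ᵀ = (τ 0)⁻¹ := by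
    rw [transpose_nonsing_inv, posDef_transpose_eq hτ0]
  -- one double-step of the iteration
  have step : ∀ n, (τ (2 * n)).PosDef → β (2 * n) = τ (2 * n) * (τ 0)⁻¹ * β 0 →
      (τ (2 * n + 1)).PosDef ∧
      β (2 * n + 1) = τ (2 * n + 1) * (β 0)ᵀ * (τ 0)⁻¹ ∧
      (τ (2 * n + 1))⁻¹ * β (2 * n + 1) = (β (2 * n))ᵀ * (τ (2 * n))⁻¹ ∧
      (τ (2 * n + 2))⁻¹ * β (2 * n + 2) = (β (2 * n + 1))ᵀ * (τ (2 * n + 1))⁻¹ ∧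
      (τ (2 * n + 2)).PosDef ∧
      β (2 * n + 2) = τ (2 * n + 2) * (τ 0)⁻¹ * β 0 := by
    intro n hpd hβf
    obtain ⟨hpd1', hcomm1'⟩ := sinkhorn_key (β (2 * n)) hσ hpd
    have hpd1 : (τ (2 * n + 1)).PosDef := by rw [hτodd n]; exact hpd1'.inv
    have hτ1inv : (τ (2 * n + 1))⁻¹ = σ⁻¹ + (β (2 * n))ᵀ * (τ (2 * n))⁻¹ * β (2 * n) := by
      rw [hτodd n, Matrix.nonsing_inv_nonsing_inv _ hpd1'.det_pos.ne'.isUnit]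
    have hcomm1 : (τ (2 * n + 1))⁻¹ * β (2 * n + 1) = (β (2 * n))ᵀ * (τ (2 * n))⁻¹ := by
      rw [hτ1inv, hβodd n]; exact hcomm1'
    obtain ⟨hpd2', hcomm2'⟩ := sinkhorn_key (β (2 * n + 1)) hσbar hpd1
    have hpd2 : (τ (2 * n + 2)).PosDef := by rw [hτeven n]; exact hpd2'.inv
    have hτ2inv : (τ (2 * n + 2))⁻¹ =
        σbar⁻¹ + (β (2 * n + 1))ᵀ * (τ (2 * n + 1))⁻¹ * β (2 * n + 1) := by
      rw [hτeven n, Matrix.nonsing_inv_nonsing_inv _ hpd2'.det_pos.ne'.isUnit]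
    have hcomm2 : (τ (2 * n + 2))⁻¹ * β (2 * n + 2) = (β (2 * n + 1))ᵀ * (τ (2 * n + 1))⁻¹ := by
      rw [hτ2inv, hβeven n]; exact hcomm2'
    -- `β (2n)ᵀ * τ(2n)⁻¹ = β 0ᵀ * τ 0⁻¹`
    have hbt : (β (2 * n))ᵀ * (τ (2 * n))⁻¹ = (β 0)ᵀ * (τ 0)⁻¹ := by
      rw [hβf, transpose_mul, transpose_mul, hτ0symm, posDef_transpose_eq hpd,
        Matrix.mul_assoc, Matrix.mul_assoc,
        mul_nonsing_inv _ hpd.det_pos.ne'.isUnit, Matrix.mul_one]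
    have hβ1 : β (2 * n + 1) = τ (2 * n + 1) * (β 0)ᵀ * (τ 0)⁻¹ := by
      have := congrArg (fun M => τ (2 * n + 1) * M) hcomm1
      simp only [← Matrix.mul_assoc, mul_nonsing_inv _ hpd1.det_pos.ne'.isUnit,
        Matrix.one_mul] at this
      rw [this, Matrix.mul_assoc, hbt, ← Matrix.mul_assoc]
    -- `β (2n+1)ᵀ * τ(2n+1)⁻¹ = τ 0⁻¹ * β 0`
    have hbt1 : (β (2 * n + 1))ᵀ * (τ (2 * n + 1))⁻¹ = (τ 0)⁻¹ * β 0 := by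
      rw [hβ1, transpose_mul, transpose_mul, hτ0symm, transpose_transpose,
        posDef_transpose_eq hpd1, Matrix.mul_assoc, Matrix.mul_assoc,
        mul_nonsing_inv _ hpd1.det_pos.ne'.isUnit, Matrix.mul_one]
    have hβ2 : β (2 * n + 2) = τ (2 * n + 2) * (τ 0)⁻¹ * β 0 := by
      have := congrArg (fun M => τ (2 * n + 2) * M) hcomm2
      simp only [← Matrix.mul_assoc, mul_nonsing_inv _ hpd2.det_pos.ne'.isUnit,
        Matrix.one_mul] at this
      rw [this, Matrix.mul_assoc, hbt1, ← Matrix.mul_assoc]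
    exact ⟨hpd1, hβ1, hcomm1, hcomm2, hpd2, hβ2⟩
  -- invariant by induction
  have inv : ∀ n, (τ (2 * n)).PosDef ∧ β (2 * n) = τ (2 * n) * (τ 0)⁻¹ * β 0 := by
    intro n
    induction n with
    | zero =>
      refine ⟨by simpa using hτ0, ?_⟩
      simp only [Nat.mul_zero]
      rw [mul_nonsing_inv _ hτ0.det_pos.ne'.isUnit, Matrix.one_mul]
    | succ n ih =>
      obtain ⟨h1, h2, h3, h4, h5, h6⟩ := step n ih.1 ih.2
      have e : 2 * (n + 1) = 2 * n + 2 := by ring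
      rw [e]
      exact ⟨h5, h6⟩
  intro n
  obtain ⟨hpd, hβf⟩ := inv n
  obtain ⟨_, h2, h3, h4, _, _⟩ := step n hpd hβf
  exact ⟨hβf, h2, h3, h4⟩
end
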